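/- arXiv:2106.01275 — 5 statements merged into one kernel-verified Lean document; each statement's English description precedes it below -/
import Mathlib

section
/- Let d ≥ 1 and k ≥ 1. The chromatic number of the displacement graph G(d,k,k) (displacement p equal to the distance k) is exactly 2k + 1. -/
/-!
If `x ≠ y` and `‖y − (x ± k e₁)‖₁ ≤ k`, then the first coordinates of `x` and `y` differ by a
nonzero amount of absolute value at most `2k`: a zero difference there already costs the full
displacement `k`, leaving nothing for the other coordinates. Hence colouring by the first
coordinate modulo `2k + 1` is proper, while `0, e₁, 2e₁, …, 2k e₁` form a clique of size `2k + 1`.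
-/

open Finset

/-- The L1 norm on the integer lattice `Fin d → ℤ`. -/
def norm1 {d : ℕ} (x : Fin d → ℤ) : ℤ := ∑ i, |x i|

/-- The first standard basis vector of `Fin d → ℤ`. -/
def e1 {d : ℕ} : Fin d → ℤ := fun i => if (i : ℕ) = 0 then 1 else 0

/-- `inN p k x y` means `y` belongs to the displaced distance-`k` neighborhood `N(x, p, k)`,
i.e. `‖y − (x + p·e₁)‖₁ ≤ k` or `‖y − (x − p·e₁)‖₁ ≤ k`. -/
def inN {d : ℕ} (p k : ℕ) (x y : Fin d → ℤ) : Prop :=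
  norm1 (y - (x + (p : ℤ) • e1)) ≤ (k : ℤ) ∨ norm1 (y - (x - (p : ℤ) • e1)) ≤ (k : ℤ)


lemma norm1_neg {d : ℕ} (x : Fin d → ℤ) : norm1 (-x) = norm1 x :=
  Finset.sum_congr rfl fun i _ => by simp

lemma inN_symm {d : ℕ} {p k : ℕ} {x y : Fin d → ℤ} (h : inN p k x y) : inN p k y x := by
  rcases h with h | h
  · right
    have hv : x - (y - (p : ℤ) • e1) = -(y - (x + (p : ℤ) • e1)) := by abel
    rw [hv, norm1_neg]; exact h
  · left
    have hv : x - (y + (p : ℤ) • e1) = -(y - (x - (p : ℤ) • e1)) := by abel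
    rw [hv, norm1_neg]; exact h

/-- The displacement graph `G(d, p, k)` on the lattice `Fin d → ℤ`:
distinct `x, y` are adjacent iff `y ∈ N(x, p, k)`. -/
def dispGraph (d p k : ℕ) : SimpleGraph (Fin d → ℤ) where
  Adj x y := x ≠ y ∧ inN p k x y
  symm := ⟨fun _ _ h => ⟨h.1.symm, inN_symm h.2⟩⟩
  loopless := ⟨fun _ h => h.1 rfl⟩

lemma norm1_nonneg {d : ℕ} (v : Fin d → ℤ) : 0 ≤ norm1 v :=
  sum_nonneg fun i _ => abs_nonneg (v i)

lemma eq_zero_of_norm1_nonpos {d : ℕ} {v : Fin d → ℤ} (h : norm1 v ≤ 0) : v = 0 := by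
  have hsum : ∑ i, |v i| = 0 := le_antisymm h (norm1_nonneg v)
  funext i
  simpa using (sum_eq_zero_iff_of_nonneg fun j _ => abs_nonneg (v j)).mp hsum i (mem_univ i)

lemma abs_apply_le_norm1 {d : ℕ} (v : Fin d → ℤ) (i : Fin d) : |v i| ≤ norm1 v :=
  single_le_sum (fun j _ => abs_nonneg (v j)) (mem_univ i)

section FirstCoordinate

variable {d : ℕ} (hd : 0 < d)
include hd

lemma e1_eq_single : (e1 : Fin d → ℤ) = Pi.single ⟨0, hd⟩ 1 := by
  funext i
  simp only [e1, Pi.single_apply, Fin.ext_iff]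

lemma norm1_smul_e1 (c : ℤ) : norm1 (c • (e1 : Fin d → ℤ)) = |c| := by
  simp [norm1, e1_eq_single hd, Pi.single_apply, apply_ite]

lemma norm1_sub_smul_e1_of_apply_eq_zero {v : Fin d → ℤ} (hv : v ⟨0, hd⟩ = 0) (c : ℤ) :
    norm1 (v - c • e1) = norm1 v + |c| := by
  have hsplit : ∀ i, |(v - c • (e1 : Fin d → ℤ)) i| = |v i| + |(c • (e1 : Fin d → ℤ)) i| := by
    intro i
    by_cases hi : i = ⟨0, hd⟩
    · subst hi; simp [hv]
    · simp [e1_eq_single hd, hi]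
  rw [norm1, Fintype.sum_congr _ _ hsplit, sum_add_distrib, ← norm1_smul_e1 hd c]
  rfl

lemma apply_zero_mem_Ioc_of_norm1_sub_smul_e1_le {p k : ℕ} (hkp : k ≤ p) {v : Fin d → ℤ}
    (hv : v ≠ 0) (h : norm1 (v - (p : ℤ) • e1) ≤ k) :
    v ⟨0, hd⟩ ∈ Set.Ioc 0 ((p + k : ℕ) : ℤ) := by
  have hcoord : |v ⟨0, hd⟩ - p| ≤ k := by
    simpa [e1_eq_single hd] using (abs_apply_le_norm1 _ ⟨0, hd⟩).trans h
  obtain ⟨hlo, hhi⟩ := abs_le.mp hcoord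
  refine ⟨lt_of_le_of_ne (by omega) fun h0 => hv (eq_zero_of_norm1_nonpos ?_), by push_cast; omega⟩
  -- a vanishing first coordinate costs the full displacement `p ≥ k`
  have := norm1_sub_smul_e1_of_apply_eq_zero hd h0.symm (p : ℤ)
  rw [abs_of_nonneg (Int.natCast_nonneg p)] at this
  omega

lemma abs_sub_apply_zero_mem_Ioc_of_dispGraph_adj {p k : ℕ} (hkp : k ≤ p) {x y : Fin d → ℤ}
    (h : (dispGraph d p k).Adj x y) :
    |y ⟨0, hd⟩ - x ⟨0, hd⟩| ∈ Set.Ioc 0 ((p + k : ℕ) : ℤ) := by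
  have key : ∀ v : Fin d → ℤ, v ≠ 0 → norm1 (v - (p : ℤ) • e1) ≤ k →
      |v ⟨0, hd⟩| ∈ Set.Ioc 0 ((p + k : ℕ) : ℤ) := fun v hv hle => by
    obtain ⟨hpos, hle'⟩ := apply_zero_mem_Ioc_of_norm1_sub_smul_e1_le hd hkp hv hle
    rw [abs_of_pos hpos]
    exact ⟨hpos, hle'⟩
  obtain ⟨hne, hplus | hminus⟩ := h
  · rw [sub_add_eq_sub_sub] at hplus
    exact key (y - x) (sub_ne_zero.mpr hne.symm) hplus
  · rw [abs_sub_comm]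
    refine key (x - y) (sub_ne_zero.mpr hne) ?_
    rw [← norm1_neg]
    convert hminus using 2
    abel

theorem dispGraph_colorable {p k : ℕ} (hkp : k ≤ p) : (dispGraph d p k).Colorable (p + k + 1) := by
  let C : (dispGraph d p k).Coloring (ZMod (p + k + 1)) :=
    SimpleGraph.Coloring.mk (fun x => ((x ⟨0, hd⟩ : ℤ) : ZMod (p + k + 1))) fun {x y} hadj hcol => by
      obtain ⟨hpos, hle⟩ := abs_sub_apply_zero_mem_Ioc_of_dispGraph_adj hd hkp hadj
      have hdvd := (ZMod.intCast_eq_intCast_iff_dvd_sub _ _ _).mp hcol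
      have := Int.eq_zero_of_abs_lt_dvd hdvd (by push_cast; omega)
      simp [this] at hpos
  simpa [ZMod.card] using C.colorable

lemma dispGraph_adj_smul_e1 {p k : ℕ} (hpk : p ≤ k + 1) {i j : ℤ} (hij : i < j)
    (hji : j - i ≤ p + k) : (dispGraph d p k).Adj (i • e1) (j • e1) := by
  refine ⟨fun h => hij.ne ?_, Or.inl ?_⟩
  · simpa [e1] using congrFun h ⟨0, hd⟩
  · rw [← add_smul, ← sub_smul, norm1_smul_e1 hd, abs_le]
    constructor <;> omega

theorem dispGraph_isClique_smul_e1 {p k : ℕ} (hpk : p ≤ k + 1) :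
    (dispGraph d p k).IsClique
      ((range (p + k + 1)).image fun j : ℕ => (j : ℤ) • (e1 : Fin d → ℤ) : Set (Fin d → ℤ)) := by
  rw [coe_image]
  rintro _ ⟨i, hi, rfl⟩ _ ⟨j, hj, rfl⟩ hne
  simp only [coe_range, Set.mem_Iio] at hi hj
  rcases lt_trichotomy i j with hij | rfl | hji
  · exact dispGraph_adj_smul_e1 hd hpk (by exact_mod_cast hij) (by omega)
  · exact absurd rfl hne
  · exact (dispGraph_adj_smul_e1 hd hpk (by exact_mod_cast hji) (by omega)).symm

theorem chromaticNumber_dispGraph {p k : ℕ} (hkp : k ≤ p) (hpk : p ≤ k + 1) :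
    (dispGraph d p k).chromaticNumber = (p + k + 1 : ℕ) := by
  refine le_antisymm (dispGraph_colorable hd hkp).chromaticNumber_le ?_
  have hinj : Function.Injective fun j : ℕ => (j : ℤ) • (e1 : Fin d → ℤ) := fun i j h => by
    simpa [e1] using congrFun h ⟨0, hd⟩
  have := (dispGraph_isClique_smul_e1 hd hpk).card_le_chromaticNumber
  rwa [card_image_of_injective _ hinj, card_range] at this

end FirstCoordinate

theorem stmt1_general (d : ℕ) (hd : 0 < d) (k : ℕ) :
    (dispGraph d k k).chromaticNumber = ((2 * k + 1 : ℕ) : ℕ∞) := by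
  rw [two_mul]
  exact chromaticNumber_dispGraph hd le_rfl (Nat.le_succ k)

/-- For `d ≥ 1` and `k ≥ 1`, the chromatic number of the displacement graph `G(d, k, k)`
is exactly `2k + 1`. -/
theorem stmt1 (d : ℕ) (hd : 0 < d) (k : ℕ) (hk : 1 ≤ k) :
    (dispGraph d k k).chromaticNumber = ((2 * k + 1 : ℕ) : ℕ∞) :=
  stmt1_general d hd k
end

section
/- Let d ≥ 1 and let p > k ≥ 1. The map x ↦ ⌊(x₁ mod 2p)/(p−k)⌋, where x₁ mod 2p is taken in {0,…,2p−1}, is a proper coloring of the displacement graph G(d,p,k) using ⌈2p/(p−k)⌉ colors: whenever x and y are adjacent in G(d,p,k), ⌊(x₁ mod 2p)/(p−k)⌋ ≠ ⌊(y₁ mod 2p)/(p−k)⌋. -/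
open Finset

lemma e1_apply_zero {d : ℕ} (hd : 0 < d) : (e1 : Fin d → ℤ) ⟨0, hd⟩ = 1 := if_pos rfl

lemma inN.abs_sub_apply_zero_bounds {d p k : ℕ} (hd : 0 < d) {x y : Fin d → ℤ}
    (h : inN p k x y) :
    (p : ℤ) - k ≤ |y ⟨0, hd⟩ - x ⟨0, hd⟩| ∧ |y ⟨0, hd⟩ - x ⟨0, hd⟩| ≤ (p : ℤ) + k := by
  rcases h with h | h <;>
  · have h0 := (abs_apply_le_norm1 _ ⟨0, hd⟩).trans h
    simp only [Pi.sub_apply, Pi.add_apply, Pi.smul_apply, e1_apply_zero hd, smul_eq_mul,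
      mul_one] at h0
    constructor <;> cases abs_cases (y ⟨0, hd⟩ - x ⟨0, hd⟩) <;> cases abs_le.mp h0 <;> omega

lemma Int.abs_sub_lt_of_ediv_eq {m a b : ℤ} (hm : 0 < m) (h : a / m = b / m) :
    |a - b| < m := by
  have hab : a - b = a % m - b % m := by
    linear_combination (Int.mul_ediv_add_emod a m).symm - (Int.mul_ediv_add_emod b m).symm + m * h
  rw [hab]
  exact abs_sub_lt_of_nonneg_of_lt (Int.emod_nonneg _ hm.ne') (Int.emod_lt_of_pos _ hm)
    (Int.emod_nonneg _ hm.ne') (Int.emod_lt_of_pos _ hm)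

lemma Int.sub_eq_emod_sub_emod_or_le {n u v : ℤ} (hn : 0 < n) :
    v - u = v % n - u % n ∨ n ≤ |v - u| + |v % n - u % n| := by
  have hq : v - u - (v % n - u % n) = n * (v / n - u / n) := by
    linear_combination (Int.mul_ediv_add_emod v n).symm - (Int.mul_ediv_add_emod u n).symm
  rcases eq_or_ne (v / n - u / n) 0 with h0 | h0
  · left; linear_combination hq + n * h0
  · right
    calc n ≤ |n * (v / n - u / n)| := by
          rw [abs_mul, abs_of_pos hn]
          exact le_mul_of_one_le_right hn.le (Int.one_le_abs h0)
      _ = |(v - u) - (v % n - u % n)| := by rw [hq]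
      _ ≤ |v - u| + |v % n - u % n| := abs_sub _ _

/-- A colour class `⌊(u mod 2p)/(p − k)⌋` is a window of `p − k` consecutive residues mod `2p`;
residues in one window differ by less than `p − k`, and even after wrapping around by `2p` such a
difference stays below `p + k`, missing the band `[p − k, p + k]` in both cases. -/
lemma Int.emod_ediv_ne_of_abs_sub_mem {p k u v : ℤ} (hkp : k < p) (hlo : p - k ≤ |v - u|)
    (hhi : |v - u| ≤ p + k) : u % (2 * p) / (p - k) ≠ v % (2 * p) / (p - k) := by
  intro h
  have hres := Int.abs_sub_lt_of_ediv_eq (sub_pos.2 hkp) h.symm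
  rcases Int.sub_eq_emod_sub_emod_or_le (n := 2 * p) (u := u) (v := v) (by linarith) with
    heq | hle
  · rw [heq] at hlo
    linarith
  · linarith

theorem stmt7_general (d : ℕ) (hd : 0 < d) (p k : ℕ) (hpk : k < p)
    (x y : Fin d → ℤ) (hadj : (dispGraph d p k).Adj x y) :
    (x ⟨0, hd⟩ % (2 * (p : ℤ))) / ((p : ℤ) - (k : ℤ)) ≠
      (y ⟨0, hd⟩ % (2 * (p : ℤ))) / ((p : ℤ) - (k : ℤ)) :=
  have ⟨hlo, hhi⟩ := hadj.2.abs_sub_apply_zero_bounds hd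
  Int.emod_ediv_ne_of_abs_sub_mem (by exact_mod_cast hpk) hlo hhi

/-- For `d ≥ 1` and `p > k ≥ 1`, the map `x ↦ ⌊(x₁ mod 2p) / (p − k)⌋` (with
`x₁ mod 2p ∈ {0, …, 2p−1}`) is a proper coloring of `G(d, p, k)`:
adjacent vertices get different colors. -/
theorem stmt7 (d : ℕ) (hd : 0 < d) (p k : ℕ) (hk : 1 ≤ k) (hpk : k < p)
    (x y : Fin d → ℤ) (hadj : (dispGraph d p k).Adj x y) :
    (x ⟨0, hd⟩ % (2 * (p : ℤ))) / ((p : ℤ) - (k : ℤ)) ≠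
      (y ⟨0, hd⟩ % (2 * (p : ℤ))) / ((p : ℤ) - (k : ℤ)) :=
  stmt7_general d hd p k hpk x y hadj
end

section
/- Let d ≥ 1 and let p, k be natural numbers with p < k and k + p even, and set α = (k+p)/2 and β = (k−p)/2. Then the chromatic number of the displacement graph G(d,p,k) is at least the cardinality of the finite set C(d,α,β). -/
/-!
`C(d, α, β)` is a clique, so no proper colouring can repeat a colour on it. For `x, y` in it,
`z = y − x` satisfies `‖z‖₁ ≤ 2α = k + p` and `∑_{i≥2} |z_i| ≤ 2β = k − p`. Shifting `z` by
`∓p·e₁` (the sign of `z₁`) turns `|z₁|` into `||z₁| − p|` and leaves the other coordinates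
alone; `||z₁| − p| ≤ k − ∑_{i≥2} |z_i|` follows from the first bound when `|z₁| ≥ p` and from
the second when `|z₁| < p`, so `y ∈ N(x, p, k)`.
-/

open Finset

/-- `∑_{i=2}^d |x_i|` : the sum of absolute values of all but the first coordinate. -/
def tailSum {d : ℕ} (x : Fin d → ℤ) : ℤ :=
  ∑ i ∈ Finset.univ.filter (fun i : Fin d => (i : ℕ) ≠ 0), |x i|


/-- The set `C(d, α, β) = { x : ‖x‖₁ ≤ α and ∑_{i=2}^d |x_i| ≤ β }`. -/
def Cset (d : ℕ) (α β : ℤ) : Set (Fin d → ℤ) := {x | norm1 x ≤ α ∧ tailSum x ≤ β}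

theorem SimpleGraph.IsClique.ncard_le_chromaticNumber {V : Type*} {G : SimpleGraph V}
    {s : Set V} (h : G.IsClique s) : (s.ncard : ℕ∞) ≤ G.chromaticNumber :=
  G.le_chromaticNumber_of_pairwise_adj (Nat.card_coe_set_eq s).ge ((↑) : s → V)
    fun a b hab => h a.2 b.2 (Subtype.coe_injective.ne hab)

section Lattice

variable {d : ℕ}

lemma norm1_sub_le (x y : Fin d → ℤ) : norm1 (y - x) ≤ norm1 y + norm1 x := by
  rw [norm1, norm1, norm1, ← sum_add_distrib]
  exact sum_le_sum fun i _ => abs_sub (y i) (x i)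

lemma tailSum_sub_le (x y : Fin d → ℤ) : tailSum (y - x) ≤ tailSum y + tailSum x := by
  rw [tailSum, tailSum, tailSum, ← sum_add_distrib]
  exact sum_le_sum fun i _ => abs_sub (y i) (x i)

lemma tailSum_add_smul_e1 (x : Fin d → ℤ) (c : ℤ) : tailSum (x + c • e1) = tailSum x := by
  refine sum_congr rfl fun i hi => ?_
  simp [e1, (mem_filter.mp hi).2]

lemma norm1_eq_abs_add_tailSum (hd : 0 < d) (x : Fin d → ℤ) :
    norm1 x = |x ⟨0, hd⟩| + tailSum x := by
  have hhead : univ.filter (fun i : Fin d => (i : ℕ) = 0) = {⟨0, hd⟩} := by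
    ext i
    simp [Fin.ext_iff]
  rw [norm1, tailSum, ← sum_filter_add_sum_filter_not univ (fun i : Fin d => (i : ℕ) = 0),
    hhead, sum_singleton]

lemma norm1_add_smul_e1 (hd : 0 < d) (x : Fin d → ℤ) (c : ℤ) :
    norm1 (x + c • e1) = |x ⟨0, hd⟩ + c| + tailSum x := by
  rw [norm1_eq_abs_add_tailSum hd, tailSum_add_smul_e1]
  simp [e1]

lemma inN_of_norm1_sub_le {p k : ℕ} (hd : 0 < d) {x y : Fin d → ℤ}
    (hnorm : norm1 (y - x) ≤ k + p) (htail : tailSum (y - x) ≤ k - p) : inN p k x y := by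
  set a := (y - x) ⟨0, hd⟩
  have hsplit : |a| + tailSum (y - x) ≤ k + p := norm1_eq_abs_add_tailSum hd (y - x) ▸ hnorm
  rcases le_or_gt 0 a with ha | ha
  · left
    rw [show y - (x + (p : ℤ) • e1) = y - x + (-(p : ℤ)) • e1 by rw [neg_smul]; abel,
      norm1_add_smul_e1 hd]
    rw [abs_of_nonneg ha] at hsplit
    have : |a + -(p : ℤ)| ≤ k - tailSum (y - x) := abs_le.mpr ⟨by linarith, by linarith⟩
    linarith
  · right
    rw [show y - (x - (p : ℤ) • e1) = y - x + (p : ℤ) • e1 by abel, norm1_add_smul_e1 hd]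
    rw [abs_of_neg ha] at hsplit
    have : |a + (p : ℤ)| ≤ k - tailSum (y - x) := abs_le.mpr ⟨by linarith, by linarith⟩
    linarith

lemma isClique_Cset {p k : ℕ} (hd : 0 < d) {α β : ℤ} (hα : 2 * α ≤ k + p)
    (hβ : 2 * β ≤ k - p) : (dispGraph d p k).IsClique (Cset d α β) := by
  intro x hx y hy hxy
  refine ⟨hxy, inN_of_norm1_sub_le hd ?_ ?_⟩
  · linarith [norm1_sub_le x y, hx.1, hy.1]
  · linarith [tailSum_sub_le x y, hx.2, hy.2]

end Lattice

theorem stmt9_general (d : ℕ) (hd : 0 < d) (p k : ℕ)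
    (α β : ℤ) (hα : 2 * α = (k : ℤ) + (p : ℤ)) (hβ : 2 * β = (k : ℤ) - (p : ℤ)) :
    (((Cset d α β).ncard : ℕ) : ℕ∞) ≤ (dispGraph d p k).chromaticNumber :=
  (isClique_Cset hd hα.le hβ.le).ncard_le_chromaticNumber

/-- If `p < k`, `k + p` is even, `α = (k+p)/2` and `β = (k−p)/2`, then the chromatic number
of the displacement graph `G(d, p, k)` is at least the cardinality of `C(d, α, β)`. -/
theorem stmt9 (d : ℕ) (hd : 0 < d) (p k : ℕ) (hpk : p < k) (heven : Even (k + p))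
    (α β : ℤ) (hα : 2 * α = (k : ℤ) + (p : ℤ)) (hβ : 2 * β = (k : ℤ) - (p : ℤ)) :
    (((Cset d α β).ncard : ℕ) : ℕ∞) ≤ (dispGraph d p k).chromaticNumber :=
  stmt9_general d hd p k α β hα hβ
end

section
/- For integers α ≥ β ≥ 0, the cardinality of the finite set C(3,α,β) = { x ∈ ℤ³ : |x₁| + |x₂| + |x₃| ≤ α and |x₂| + |x₃| ≤ β } satisfies 3·|C(3,α,β)| = −8β³ + (12α − 6)β² + (12α + 2)β + 6α + 3. -/
/-!
Slice `C(3, α, β)` along the last two coordinates `(b, c)`: over a point with `|b| + |c| ≤ β` the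
fibre is the interval `|a| ≤ α - |b| - |c|`, with `2 (α - |b| - |c|) + 1` points. Summing over `c`
and then over `b` leaves sums of polynomials in `|b|` over the symmetric interval `[-β, β]`,
which are given by the moments `∑ 1`, `∑ |a|`, `∑ a²` of such an interval.
-/

open Finset

lemma sum_Icc_neg_succ {M : Type*} [AddCommMonoid M] (f : ℤ → M) {t : ℤ} (ht : 0 ≤ t) :
    ∑ a ∈ Icc (-(t + 1)) (t + 1), f a = ∑ a ∈ Icc (-t) t, f a + f (t + 1) + f (-(t + 1)) := by
  have hIcc : Icc (-(t + 1)) (t + 1) = insert (t + 1) (insert (-(t + 1)) (Icc (-t) t)) := by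
    ext; simp only [mem_Icc, mem_insert]; omega
  rw [hIcc, sum_insert (by simp; omega), sum_insert (by simp), add_comm, add_assoc, add_comm]

lemma three_mul_sum_Icc_neg_quadratic_abs (p q r : ℤ) {t : ℤ} (ht : 0 ≤ t) :
    3 * ∑ a ∈ Icc (-t) t, (p * |a| ^ 2 + q * |a| + r) =
      p * (2 * t ^ 3 + 3 * t ^ 2 + t) + 3 * q * (t ^ 2 + t) + 3 * r * (2 * t + 1) := by
  induction t, ht using Int.leInduction with
  | base => simp
  | succ t ht ih =>
    rw [sum_Icc_neg_succ _ ht, mul_add, mul_add, ih, abs_neg, abs_of_nonneg (by omega)]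
    ring

lemma sum_Icc_neg_affine_abs (q r : ℤ) {t : ℤ} (ht : 0 ≤ t) :
    ∑ a ∈ Icc (-t) t, (q * |a| + r) = q * (t ^ 2 + t) + r * (2 * t + 1) := by
  have h := three_mul_sum_Icc_neg_quadratic_abs 0 q r ht
  simp only [zero_mul, zero_add] at h
  linarith

lemma sum_Icc_ite_abs_le {M : Type*} [AddCommMonoid M] (f : ℤ → M) {s t : ℤ} (h : t ≤ s) :
    ∑ a ∈ Icc (-s) s, (if |a| ≤ t then f a else 0) = ∑ a ∈ Icc (-t) t, f a := by
  rw [← sum_filter]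
  congr 1
  ext a
  simp only [mem_filter, mem_Icc, abs_le]
  omega

lemma card_Icc_neg {t : ℤ} (ht : 0 ≤ t) : (#(Icc (-t) t) : ℤ) = 2 * t + 1 := by
  rw [Int.card_Icc_of_le _ _ (by omega)]
  ring

lemma sum_Icc_boole_abs_le {s t : ℤ} (h₀ : 0 ≤ t) (h : t ≤ s) :
    ∑ a ∈ Icc (-s) s, (if |a| ≤ t then 1 else 0 : ℤ) = 2 * t + 1 := by
  rw [sum_Icc_ite_abs_le _ h, sum_const, nsmul_one, card_Icc_neg h₀]

lemma ncard_eq_sum_sum_sum (α β : ℤ) :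
    ({x : Fin 3 → ℤ | |x 0| + |x 1| + |x 2| ≤ α ∧ |x 1| + |x 2| ≤ β}.ncard : ℤ) =
      ∑ b ∈ Icc (-β) β, ∑ c ∈ Icc (-β) β, ∑ a ∈ Icc (-α) α,
        if |c| ≤ β - |b| ∧ |a| ≤ α - |b| - |c| then 1 else 0 := by
  set T := (Icc (-α) α ×ˢ Icc (-β) β ×ˢ Icc (-β) β).filter
    fun p : ℤ × ℤ × ℤ => |p.2.2| ≤ β - |p.2.1| ∧ |p.1| ≤ α - |p.2.1| - |p.2.2|
  have hinj : Function.Injective fun p : ℤ × ℤ × ℤ => ![p.1, p.2.1, p.2.2] := by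
    intro p q h
    simpa [Prod.ext_iff] using And.intro (congrFun h 0) (And.intro (congrFun h 1) (congrFun h 2))
  have hS : {x : Fin 3 → ℤ | |x 0| + |x 1| + |x 2| ≤ α ∧ |x 1| + |x 2| ≤ β} =
      (fun p : ℤ × ℤ × ℤ => ![p.1, p.2.1, p.2.2]) '' T := by
    ext x
    constructor
    · rintro ⟨h₁, h₂⟩
      refine ⟨(x 0, x 1, x 2), ?_, ?_⟩
      · simp only [T, coe_filter, mem_product, mem_Icc, Set.mem_ofPred_eq, ← abs_le]
        have := abs_nonneg (x 0); have := abs_nonneg (x 1); have := abs_nonneg (x 2)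
        omega
      · ext i; fin_cases i <;> rfl
    · rintro ⟨p, hp, rfl⟩
      obtain ⟨-, hc, ha⟩ := mem_filter.1 hp
      simp only [Set.mem_ofPred_eq, Matrix.cons_val_zero, Matrix.cons_val_one,
        Matrix.cons_val_two, Matrix.head_cons, Matrix.tail_cons]
      omega
  rw [hS, Set.ncard_image_of_injective _ hinj, Set.ncard_coe_finset, card_filter, sum_product,
    sum_comm, sum_product]
  push_cast
  rfl

/-- For integers `α ≥ β ≥ 0`, the cardinality of
`C(3, α, β) = { x ∈ ℤ³ : |x₁| + |x₂| + |x₃| ≤ α and |x₂| + |x₃| ≤ β }` satisfies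
`3·|C(3, α, β)| = −8β³ + (12α − 6)β² + (12α + 2)β + 6α + 3`. -/
theorem stmt18 (α β : ℤ) (hβ : 0 ≤ β) (hαβ : β ≤ α) :
    3 * (({x : Fin 3 → ℤ | |x 0| + |x 1| + |x 2| ≤ α ∧ |x 1| + |x 2| ≤ β}.ncard : ℤ)) =
      -8 * β ^ 3 + (12 * α - 6) * β ^ 2 + (12 * α + 2) * β + 6 * α + 3 := by
  have column (b c : ℤ) :
      ∑ a ∈ Icc (-α) α, (if |c| ≤ β - |b| ∧ |a| ≤ α - |b| - |c| then 1 else 0 : ℤ) =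
        if |c| ≤ β - |b| then -2 * |c| + (2 * α - 2 * |b| + 1) else 0 := by
    split_ifs with hc
    · simp only [hc, true_and]
      rw [sum_Icc_boole_abs_le (by linarith) (by linarith [abs_nonneg b, abs_nonneg c])]
      ring
    · simp [hc]
  have slice {b : ℤ} (hb : |b| ≤ β) :
      ∑ c ∈ Icc (-β) β, (if |c| ≤ β - |b| then -2 * |c| + (2 * α - 2 * |b| + 1) else 0) =
        2 * |b| ^ 2 + -(4 * α + 2) * |b| + (4 * α * β + 2 * α + 1 - 2 * β ^ 2) := by
    rw [sum_Icc_ite_abs_le _ (by linarith [abs_nonneg b]),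
      sum_Icc_neg_affine_abs _ _ (by linarith)]
    ring
  rw [ncard_eq_sum_sum_sum]
  simp only [column]
  rw [sum_congr rfl fun b hb => slice (abs_le.2 (mem_Icc.1 hb)),
    three_mul_sum_Icc_neg_quadratic_abs _ _ _ hβ]
  ring
end

section
/- For integers α ≥ β ≥ 0, the cardinality of the finite set C(4,α,β) = { x ∈ ℤ⁴ : |x₁| + |x₂| + |x₃| + |x₄| ≤ α and |x₂| + |x₃| + |x₄| ≤ β } satisfies 3·|C(4,α,β)| = 2(4β³ + 6β² + 8β + 3)α − 6β⁴ − 8β³ − 6β² + 2β + 3. -/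
/-!
Write `x = (t, y)` with `t = x₀`. Over each `y ∈ ℤ³` with `‖y‖₁ ≤ β` the fibre is the interval
`|t| ≤ α - ‖y‖₁` of `2 (α - ‖y‖₁) + 1` integers, so `|C(4,α,β)| = |B₄(β)| + 2 (α - β) |B₃(β)|`,
where `Bₙ(r)` is the `ℓ¹`-ball of `ℤⁿ`. The same fibering gives the recurrence
`|Bₙ₊₁(r+1)| = |Bₙ₊₁(r)| + |Bₙ(r)| + |Bₙ(r+1)|`, from which the closed forms
`3 |B₃(r)| = 4r³ + 6r² + 8r + 3` and `3 |B₄(r)| = 2r⁴ + 4r³ + 10r² + 8r + 3` follow by induction.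
-/

open Finset

def l1Norm {n : ℕ} (x : Fin n → ℤ) : ℕ := ∑ i, (x i).natAbs

noncomputable def l1Ball (n r : ℕ) : Finset (Fin n → ℤ) :=
  {x ∈ Fintype.piFinset fun _ => Icc (-r : ℤ) r | l1Norm x ≤ r}

section L1Ball

variable {n : ℕ}

theorem natAbs_le_l1Norm (x : Fin n → ℤ) (i : Fin n) : (x i).natAbs ≤ l1Norm x :=
  single_le_sum (f := fun i => (x i).natAbs) (fun _ _ => Nat.zero_le _) (mem_univ i)

theorem l1Norm_succ (x : Fin (n + 1) → ℤ) : l1Norm x = (x 0).natAbs + l1Norm (Fin.tail x) :=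
  Fin.sum_univ_succ _

theorem natCast_l1Norm (x : Fin n → ℤ) : (l1Norm x : ℤ) = ∑ i, |x i| := by
  simp [l1Norm]

theorem mem_l1Ball {r : ℕ} {x : Fin n → ℤ} : x ∈ l1Ball n r ↔ l1Norm x ≤ r := by
  simp only [l1Ball, mem_filter, Fintype.mem_piFinset, mem_Icc, and_iff_right_iff_imp]
  intro hx i
  have := natAbs_le_l1Norm x i
  omega

theorem l1Ball_mono {r s : ℕ} (h : r ≤ s) : l1Ball n r ⊆ l1Ball n s := fun x hx => by
  rw [mem_l1Ball] at hx ⊢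
  omega

theorem card_l1Ball_zero_left (r : ℕ) : #(l1Ball 0 r) = 1 :=
  card_eq_one.2 ⟨0, by ext x; simp [mem_l1Ball, l1Norm, Subsingleton.elim x 0]⟩

theorem card_filter_l1Ball_tail_le {R m : ℕ} (hm : m ≤ R) :
    #{x ∈ l1Ball (n + 1) R | l1Norm (Fin.tail x) ≤ m} =
      ∑ y ∈ l1Ball n m, (2 * (R - l1Norm y) + 1) := by
  rw [card_eq_sum_card_fiberwise (f := Fin.tail) (t := l1Ball n m)]
  · refine sum_congr rfl fun y hy => ?_
    rw [mem_l1Ball] at hy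
    have hfiber : {x ∈ {x ∈ l1Ball (n + 1) R | l1Norm (Fin.tail x) ≤ m} | Fin.tail x = y} =
        (Icc (-(R - l1Norm y : ℕ) : ℤ) (R - l1Norm y : ℕ)).map
          ⟨fun a => Fin.cons a y, Fin.cons_left_injective (α := fun _ => ℤ) y⟩ := by
      ext x
      simp only [mem_filter, mem_l1Ball, mem_map, mem_Icc, Function.Embedding.coeFn_mk]
      constructor
      · rintro ⟨⟨hx, -⟩, rfl⟩
        rw [l1Norm_succ] at hx
        exact ⟨x 0, by omega, Fin.cons_self_tail x⟩
      · rintro ⟨a, ha, rfl⟩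
        simp only [l1Norm_succ, Fin.cons_zero, Fin.tail_cons, and_true]
        omega
    rw [hfiber, card_map, Int.card_Icc]
    omega
  · exact fun x hx => mem_l1Ball.2 (mem_filter.1 hx).2

theorem card_l1Ball_succ (r : ℕ) :
    #(l1Ball (n + 1) r) = ∑ y ∈ l1Ball n r, (2 * (r - l1Norm y) + 1) := by
  rw [← card_filter_l1Ball_tail_le le_rfl, filter_true_of_mem]
  intro x hx
  rw [mem_l1Ball, l1Norm_succ] at hx
  omega

theorem card_filter_l1Ball_tail_le_add (m d : ℕ) :
    #{x ∈ l1Ball (n + 1) (m + d) | l1Norm (Fin.tail x) ≤ m} =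
      #(l1Ball (n + 1) m) + 2 * d * #(l1Ball n m) := by
  rw [card_filter_l1Ball_tail_le (Nat.le_add_right m d), card_l1Ball_succ, card_eq_sum_ones,
    mul_sum, ← sum_add_distrib]
  refine sum_congr rfl fun y hy => ?_
  rw [mem_l1Ball] at hy
  omega

theorem card_l1Ball_zero_right (n : ℕ) : #(l1Ball n 0) = 1 := by
  induction n with
  | zero => exact card_l1Ball_zero_left 0
  | succ n ih =>
    simpa [card_l1Ball_succ] using ih

theorem card_l1Ball_succ_succ (r : ℕ) :
    #(l1Ball (n + 1) (r + 1)) = #(l1Ball (n + 1) r) + #(l1Ball n r) + #(l1Ball n (r + 1)) := by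
  have hsub := l1Ball_mono (n := n) (Nat.le_succ r)
  -- Over the shell `‖y‖ = r + 1` the fibre is `{0}`; over `l1Ball n r` it gains the two points
  -- `±(r + 1 - ‖y‖)` compared with radius `r`.
  have hshell : ∑ y ∈ l1Ball n (r + 1) \ l1Ball n r, (2 * (r + 1 - l1Norm y) + 1) =
      #(l1Ball n (r + 1) \ l1Ball n r) := by
    rw [card_eq_sum_ones]
    refine sum_congr rfl fun y hy => ?_
    simp only [mem_sdiff, mem_l1Ball] at hy
    omega
  have hinner : ∑ y ∈ l1Ball n r, (2 * (r + 1 - l1Norm y) + 1) =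
      #(l1Ball (n + 1) r) + 2 * #(l1Ball n r) := by
    rw [card_l1Ball_succ, card_eq_sum_ones, mul_sum, ← sum_add_distrib]
    refine sum_congr rfl fun y hy => ?_
    rw [mem_l1Ball] at hy
    omega
  rw [card_l1Ball_succ, ← sum_sdiff hsub, hshell, hinner, ← card_sdiff_add_card_eq_card hsub]
  ring

end L1Ball

theorem card_l1Ball_one (r : ℕ) : #(l1Ball 1 r) = 2 * r + 1 := by
  induction r with
  | zero => exact card_l1Ball_zero_right 1
  | succ r ih => rw [card_l1Ball_succ_succ, ih, card_l1Ball_zero_left, card_l1Ball_zero_left]; ring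

theorem card_l1Ball_two (r : ℕ) : #(l1Ball 2 r) = 2 * r ^ 2 + 2 * r + 1 := by
  induction r with
  | zero => exact card_l1Ball_zero_right 2
  | succ r ih => rw [card_l1Ball_succ_succ, ih, card_l1Ball_one, card_l1Ball_one]; ring

theorem three_mul_card_l1Ball_three (r : ℕ) :
    3 * #(l1Ball 3 r) = 4 * r ^ 3 + 6 * r ^ 2 + 8 * r + 3 := by
  induction r with
  | zero => simp [card_l1Ball_zero_right]
  | succ r ih =>
    rw [card_l1Ball_succ_succ, mul_add, mul_add, ih, card_l1Ball_two, card_l1Ball_two]; ring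

theorem three_mul_card_l1Ball_four (r : ℕ) :
    3 * #(l1Ball 4 r) = 2 * r ^ 4 + 4 * r ^ 3 + 10 * r ^ 2 + 8 * r + 3 := by
  induction r with
  | zero => simp [card_l1Ball_zero_right]
  | succ r ih =>
    rw [card_l1Ball_succ_succ, mul_add, mul_add, ih, three_mul_card_l1Ball_three,
      three_mul_card_l1Ball_three]
    ring

/-- For integers `α ≥ β ≥ 0`, the cardinality of
`C(4, α, β) = { x ∈ ℤ⁴ : |x₁| + |x₂| + |x₃| + |x₄| ≤ α and |x₂| + |x₃| + |x₄| ≤ β }` satisfies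
`3·|C(4, α, β)| = 2(4β³ + 6β² + 8β + 3)α − 6β⁴ − 8β³ − 6β² + 2β + 3`. -/
theorem stmt19 (α β : ℤ) (hβ : 0 ≤ β) (hαβ : β ≤ α) :
    3 * (({x : Fin 4 → ℤ |
        |x 0| + |x 1| + |x 2| + |x 3| ≤ α ∧ |x 1| + |x 2| + |x 3| ≤ β}.ncard : ℤ)) =
      2 * (4 * β ^ 3 + 6 * β ^ 2 + 8 * β + 3) * α
        - 6 * β ^ 4 - 8 * β ^ 3 - 6 * β ^ 2 + 2 * β + 3 := by
  lift β to ℕ using hβ with m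
  obtain ⟨d, rfl⟩ : ∃ d : ℕ, α = m + d := ⟨(α - m).toNat, by omega⟩
  have hset : {x : Fin 4 → ℤ |
      |x 0| + |x 1| + |x 2| + |x 3| ≤ m + d ∧ |x 1| + |x 2| + |x 3| ≤ m} =
      ↑({x ∈ l1Ball 4 (m + d) | l1Norm (Fin.tail x) ≤ m}) := by
    ext x
    simp only [Set.mem_ofPred_eq, coe_filter, mem_l1Ball, ← Nat.cast_le (α := ℤ), natCast_l1Norm,
      Fin.sum_univ_four, Fin.sum_univ_three, Fin.tail]
    rfl
  have h3 := three_mul_card_l1Ball_three m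
  have h4 := three_mul_card_l1Ball_four m
  rw [hset, Set.ncard_coe_finset, card_filter_l1Ball_tail_le_add]
  zify at h3 h4
  push_cast
  linear_combination h4 + 2 * (d : ℤ) * h3
end
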